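/- If T : ℂ^{2n} → ℂ^{2n} is a non-negative complex symplectic linear transformation, then its inverse of conjugate, conj(T)^{-1}, is also a non-negative complex symplectic linear transformation. -/

import Mathlib

open Matrix
open scoped ComplexOrder

/-- The standard symplectic matrix `[[0, Iₙ], [-Iₙ, 0]]`. -/
noncomputable def sympMat (n : ℕ) : Matrix (Fin n ⊕ Fin n) (Fin n ⊕ Fin n) ℂ :=
  Matrix.fromBlocks 0 1 (-1) 0

/-- The standard symplectic bilinear form `σ((x,ξ),(y,η)) = ⟨ξ,y⟩ - ⟨x,η⟩` on `ℂ^{2n}`. -/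
noncomputable def sympForm (n : ℕ) (X Y : Fin n ⊕ Fin n → ℂ) : ℂ :=
  (sympMat n *ᵥ X) ⬝ᵥ Y

/-!
Since `σ` has real coefficients, `σ(X̄, Ȳ) = conj σ(X, Y)`, so `S = conj(T)` is symplectic,
and hence so is `S⁻¹`. For non-negativity write `q(Z) = i σ(Z̄, Z)` and `Y = S⁻¹ X`; then
`T Ȳ = X̄`, so non-negativity of `T` at `Ȳ` gives `q(X̄) ≥ q(Ȳ)`. Antisymmetry of `σ` gives
`q(Z̄) = -q(Z)`, which turns this into `q(S⁻¹ X) ≥ q(X)`.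
-/

theorem Matrix.map_starRingEnd_mulVec_star {ι R : Type*} [Fintype ι] [CommSemiring R]
    [StarRing R] (T : Matrix ι ι R) (X : ι → R) :
    T.map (starRingEnd R) *ᵥ star X = star (T *ᵥ X) := by
  rw [star_mulVec, conjTranspose, transpose_map, vecMul_transpose]
  rfl

theorem Matrix.isUnit_det_map_starRingEnd {ι R : Type*} [Fintype ι] [DecidableEq ι] [CommRing R]
    [StarRing R] {T : Matrix ι ι R} (hT : IsUnit T.det) : IsUnit (T.map (starRingEnd R)).det := by
  rw [← RingHom.mapMatrix_apply, ← RingHom.map_det]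
  exact hT.map _

theorem Matrix.mulVec_nonsing_inv_mulVec {ι R : Type*} [Fintype ι] [DecidableEq ι] [CommRing R]
    {S : Matrix ι ι R} (hS : IsUnit S.det) (X : ι → R) : S *ᵥ (S⁻¹ *ᵥ X) = X := by
  rw [mulVec_mulVec, mul_nonsing_inv _ hS, one_mulVec]

theorem sympMat_map_starRingEnd (n : ℕ) : (sympMat n).map (starRingEnd ℂ) = sympMat n := by
  simp [sympMat, fromBlocks_map, Matrix.map_neg]

theorem sympMat_transpose (n : ℕ) : (sympMat n)ᵀ = -sympMat n := by
  simp [sympMat, fromBlocks_transpose, fromBlocks_neg]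

theorem sympForm_star_star (n : ℕ) (X Y : Fin n ⊕ Fin n → ℂ) :
    sympForm n (star X) (star Y) = star (sympForm n X Y) := by
  rw [sympForm, sympForm]
  conv_lhs => rw [← sympMat_map_starRingEnd, map_starRingEnd_mulVec_star, star_dotProduct_star]
  rw [dotProduct_comm]

theorem sympForm_swap (n : ℕ) (X Y : Fin n ⊕ Fin n → ℂ) :
    sympForm n Y X = -sympForm n X Y := by
  rw [sympForm, sympForm, dotProduct_comm, dotProduct_mulVec, ← mulVec_transpose,
    sympMat_transpose, neg_mulVec, neg_dotProduct]

def IsSymplectic (n : ℕ) (T : Matrix (Fin n ⊕ Fin n) (Fin n ⊕ Fin n) ℂ) : Prop :=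
  ∀ X Y : Fin n ⊕ Fin n → ℂ, sympForm n (T *ᵥ X) (T *ᵥ Y) = sympForm n X Y

def IsSymplecticNonneg (n : ℕ) (T : Matrix (Fin n ⊕ Fin n) (Fin n ⊕ Fin n) ℂ) : Prop :=
  ∀ X : Fin n ⊕ Fin n → ℂ,
    0 ≤ Complex.I * (sympForm n (star (T *ᵥ X)) (T *ᵥ X) - sympForm n (star X) X)

section

variable {n : ℕ} {T : Matrix (Fin n ⊕ Fin n) (Fin n ⊕ Fin n) ℂ}

theorem IsSymplectic.map_starRingEnd (hT : IsSymplectic n T) :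
    IsSymplectic n (T.map (starRingEnd ℂ)) := fun X Y => by
  rw [← star_star X, ← star_star Y, map_starRingEnd_mulVec_star, map_starRingEnd_mulVec_star,
    sympForm_star_star, sympForm_star_star, hT]

theorem IsSymplectic.nonsing_inv (hT : IsSymplectic n T) (hdet : IsUnit T.det) :
    IsSymplectic n T⁻¹ := fun X Y => by
  rw [← hT, mulVec_nonsing_inv_mulVec hdet, mulVec_nonsing_inv_mulVec hdet]

theorem IsSymplecticNonneg.map_starRingEnd_nonsing_inv (hT : IsSymplecticNonneg n T)
    (hdet : IsUnit T.det) : IsSymplecticNonneg n (T.map (starRingEnd ℂ))⁻¹ := by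
  intro X
  set Y := (T.map (starRingEnd ℂ))⁻¹ *ᵥ X
  have hTY : T *ᵥ star Y = star X := by
    rw [← star_star (T *ᵥ star Y), ← map_starRingEnd_mulVec_star, star_star,
      mulVec_nonsing_inv_mulVec (isUnit_det_map_starRingEnd hdet)]
  have h := hT (star Y)
  rw [hTY, star_star, star_star, sympForm_swap n (star X), sympForm_swap n (star Y)] at h
  convert h using 1
  ring

end

/-- If `T` is a non-negative complex symplectic linear transformation, then so is
`conj(T)⁻¹`, the inverse of its entrywise conjugate. -/
theorem conj_inv_nonneg_symplectic (n : ℕ)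
    (T : Matrix (Fin n ⊕ Fin n) (Fin n ⊕ Fin n) ℂ)
    (hTunit : IsUnit T.det)
    (hTsymp : ∀ X Y : Fin n ⊕ Fin n → ℂ, sympForm n (T *ᵥ X) (T *ᵥ Y) = sympForm n X Y)
    (hTnonneg : ∀ X : Fin n ⊕ Fin n → ℂ,
      0 ≤ Complex.I * (sympForm n (star (T *ᵥ X)) (T *ᵥ X) - sympForm n (star X) X)) :
    IsUnit ((T.map (starRingEnd ℂ))⁻¹).det ∧
    (∀ X Y : Fin n ⊕ Fin n → ℂ,
      sympForm n ((T.map (starRingEnd ℂ))⁻¹ *ᵥ X) ((T.map (starRingEnd ℂ))⁻¹ *ᵥ Y)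
        = sympForm n X Y) ∧
    (∀ X : Fin n ⊕ Fin n → ℂ,
      0 ≤ Complex.I * (sympForm n (star ((T.map (starRingEnd ℂ))⁻¹ *ᵥ X))
            ((T.map (starRingEnd ℂ))⁻¹ *ᵥ X) - sympForm n (star X) X)) := by
  have hdet := isUnit_det_map_starRingEnd hTunit
  have hT : IsSymplectic n T := hTsymp
  exact ⟨isUnit_nonsing_inv_det _ hdet, hT.map_starRingEnd.nonsing_inv hdet,
    IsSymplecticNonneg.map_starRingEnd_nonsing_inv hTnonneg hTunit⟩
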